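/- arXiv:2605.19500 — 3 statements merged into one kernel-verified Lean document; each statement's English description precedes it below -/
import Mathlib

section
/- Let \nu > -1/2 and b > -1/2. For every j\ge 2 and every \eta=(\eta_1,\eta_2) with 1/2\le \eta_2\le 2 and \sqrt{2^{1-j}}\,\eta_2/|\eta_1| > 1, one has \int_{|\eta_1|/\eta_2}^{\sqrt{2^{1-j}}} t^{2b} (1 - \eta_1^2/(t^2\eta_2^2))^{2\nu} dt \le C (|\eta_1|/\eta_2)^{2b+1} (\eta_2/|\eta_1|)^{2b+1} 2^{-j(2b+1)/2} = C\, 2^{-j(2b+1)/2}, where C depends only on \nu and b. -/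
/-!
After rescaling, the integral is `∫_a^A t^p (1 - a²/t²)^q dt` with `p, q > -1` and `0 < a < A`.
Since `1 - a²/t² ≥ (t - a)/t`, lowering the exponent to `m = min p (min q 0)` gives the pointwise
bound `A^(p-m) (t - a)^m`, which is integrable at `t = a` because `m > -1`; its integral is at most
`A^(p+1)/(m+1)`, and `A^(p+1)` is the claimed power of `2`.
-/

open MeasureTheory Real Set

lemma div_sub_le_one_sub_sq_div_sq {a t : ℝ} (ha : 0 ≤ a) (hat : a ≤ t) (ht : 0 < t) :
    (t - a) / t ≤ 1 - a ^ 2 / t ^ 2 := by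
  have hgap : 1 - a ^ 2 / t ^ 2 - (t - a) / t = a * (t - a) / t ^ 2 := by
    field_simp
    ring
  have : 0 ≤ a * (t - a) / t ^ 2 := div_nonneg (mul_nonneg ha (sub_nonneg.2 hat)) (sq_nonneg t)
  linarith

lemma one_sub_sq_div_sq_pos {a t : ℝ} (ha : 0 ≤ a) (hat : a < t) : 0 < 1 - a ^ 2 / t ^ 2 := by
  have ht : 0 < t := ha.trans_lt hat
  exact (div_pos (sub_pos.2 hat) ht).trans_le (div_sub_le_one_sub_sq_div_sq ha hat.le ht)

lemma rpow_mul_one_sub_sq_div_sq_rpow_le {p q m a t A : ℝ} (hmp : m ≤ p) (hmq : m ≤ q)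
    (hm : m ≤ 0) (ha : 0 < a) (hat : a < t) (htA : t ≤ A) :
    t ^ p * (1 - a ^ 2 / t ^ 2) ^ q ≤ A ^ (p - m) * (t - a) ^ m := by
  have ht : 0 < t := ha.trans hat
  have hta : 0 < t - a := sub_pos.2 hat
  have hratio : (t - a) / t ≤ 1 - a ^ 2 / t ^ 2 := div_sub_le_one_sub_sq_div_sq ha.le hat.le ht
  have hx_le_one : 1 - a ^ 2 / t ^ 2 ≤ 1 := by
    have : 0 ≤ a ^ 2 / t ^ 2 := by positivity
    linarith
  have hx_pos : 0 < 1 - a ^ 2 / t ^ 2 := one_sub_sq_div_sq_pos ha.le hat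
  calc t ^ p * (1 - a ^ 2 / t ^ 2) ^ q
      ≤ t ^ p * ((t - a) / t) ^ m := by
        gcongr
        calc (1 - a ^ 2 / t ^ 2) ^ q ≤ (1 - a ^ 2 / t ^ 2) ^ m :=
              rpow_le_rpow_of_exponent_ge hx_pos hx_le_one hmq
          _ ≤ ((t - a) / t) ^ m := rpow_le_rpow_of_nonpos (div_pos hta ht) hratio hm
    _ = t ^ (p - m) * (t - a) ^ m := by
        rw [div_rpow hta.le ht.le, rpow_sub ht]
        field_simp
    _ ≤ A ^ (p - m) * (t - a) ^ m := by gcongr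

lemma integral_sub_rpow_le {m a A : ℝ} (hm : -1 < m) (ha : 0 ≤ a) (haA : a ≤ A) :
    ∫ t in a..A, (t - a) ^ m ≤ A ^ (m + 1) / (m + 1) := by
  have hm1 : 0 < m + 1 := by linarith
  rw [intervalIntegral.integral_comp_sub_right (fun s => s ^ m) a, sub_self,
    integral_rpow (Or.inl hm), zero_rpow hm1.ne', sub_zero]
  gcongr
  linarith

theorem integral_rpow_mul_one_sub_sq_div_sq_rpow_le {p q a A : ℝ} (hp : -1 < p) (hq : -1 < q)
    (ha : 0 < a) (haA : a < A) :
    ∫ t in a..A, t ^ p * (1 - a ^ 2 / t ^ 2) ^ q ≤ A ^ (p + 1) / (min p (min q 0) + 1) := by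
  set m := min p (min q 0)
  have hm : -1 < m := lt_min hp (lt_min hq (by norm_num))
  have hA : 0 < A := ha.trans haA
  have hmajorant_int : IntegrableOn (fun t => A ^ (p - m) * (t - a) ^ m) (Ioc a A) := by
    have h := (intervalIntegral.intervalIntegrable_rpow' hm
      (a := a - a) (b := A - a)).comp_sub_right a
    simp only [sub_add_cancel] at h
    exact h.1.const_mul _
  have hpointwise : ∀ t ∈ Ioc a A,
      t ^ p * (1 - a ^ 2 / t ^ 2) ^ q ≤ A ^ (p - m) * (t - a) ^ m := fun t ht =>
    rpow_mul_one_sub_sq_div_sq_rpow_le (min_le_left _ _)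
      ((min_le_right _ _).trans (min_le_left _ _)) ((min_le_right _ _).trans (min_le_right _ _))
      ha ht.1 ht.2
  have hnonneg : ∀ t ∈ Ioc a A, 0 ≤ t ^ p * (1 - a ^ 2 / t ^ 2) ^ q := fun t ht => by
    exact mul_nonneg (rpow_nonneg (ha.trans ht.1).le _)
      (rpow_nonneg (one_sub_sq_div_sq_pos ha.le ht.1).le _)
  calc ∫ t in a..A, t ^ p * (1 - a ^ 2 / t ^ 2) ^ q
      ≤ ∫ t in a..A, A ^ (p - m) * (t - a) ^ m := by
        rw [intervalIntegral.integral_of_le haA.le, intervalIntegral.integral_of_le haA.le]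
        exact integral_mono_of_nonneg (ae_restrict_of_forall_mem measurableSet_Ioc hnonneg)
          hmajorant_int (ae_restrict_of_forall_mem measurableSet_Ioc hpointwise)
    _ = A ^ (p - m) * ∫ t in a..A, (t - a) ^ m := intervalIntegral.integral_const_mul _ _
    _ ≤ A ^ (p - m) * (A ^ (m + 1) / (m + 1)) := by
        gcongr
        exact integral_sub_rpow_le hm ha.le haA.le
    _ = A ^ (p + 1) / (m + 1) := by
        rw [mul_div_assoc', ← rpow_add hA]
        ring_nf

/-- the key Fourier-side bound in the `L²` estimate for `H_b^{ν,j}`. -/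
theorem fourier_side_bound (ν b : ℝ) (hν : -(1/2 : ℝ) < ν) (hb : -(1/2 : ℝ) < b) :
    ∃ C > 0, ∀ (j : ℕ), 2 ≤ j → ∀ η₁ η₂ : ℝ, 1/2 ≤ η₂ → η₂ ≤ 2 →
      1 < Real.sqrt ((2:ℝ) ^ (1 - (j:ℝ))) * η₂ / |η₁| →
      ∫ t in (|η₁| / η₂)..(Real.sqrt ((2:ℝ) ^ (1 - (j:ℝ)))),
          t ^ (2 * b) * (1 - η₁ ^ 2 / (t ^ 2 * η₂ ^ 2)) ^ (2 * ν)
        ≤ C * (2:ℝ) ^ (-(j:ℝ) * (2 * b + 1) / 2) := by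
  have hm : 0 < min (2 * b) (min (2 * ν) 0) + 1 :=
    neg_lt_iff_pos_add.1 (lt_min (by linarith) (lt_min (by linarith) (by norm_num)))
  refine ⟨2 ^ ((2 * b + 1) / 2) / (min (2 * b) (min (2 * ν) 0) + 1), by positivity, ?_⟩
  intro j _ η₁ η₂ hη₂_lower _ hratio
  have hη₂ : 0 < η₂ := by linarith
  have hη₁ : η₁ ≠ 0 := by
    rintro rfl
    norm_num at hratio
  have hpow : (0 : ℝ) < 2 ^ (1 - (j : ℝ)) := by positivity
  have ha : 0 < |η₁| / η₂ := by positivity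
  have haA : |η₁| / η₂ < √(2 ^ (1 - (j : ℝ))) := by
    rwa [div_lt_iff₀ hη₂, ← one_lt_div (abs_pos.2 hη₁)]
  have hintegrand : ∀ t : ℝ, η₁ ^ 2 / (t ^ 2 * η₂ ^ 2) = (|η₁| / η₂) ^ 2 / t ^ 2 := fun t => by
    rw [div_pow, sq_abs]
    ring
  have hApow : √(2 ^ (1 - (j : ℝ))) ^ (2 * b + 1)
      = 2 ^ ((2 * b + 1) / 2) * (2:ℝ) ^ (-(j:ℝ) * (2 * b + 1) / 2) := by
    rw [sqrt_eq_rpow, ← rpow_mul hpow.le, ← rpow_mul zero_le_two, ← rpow_add zero_lt_two]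
    ring_nf
  simp only [hintegrand]
  calc _ ≤ √(2 ^ (1 - (j : ℝ))) ^ (2 * b + 1) / (min (2 * b) (min (2 * ν) 0) + 1) :=
        integral_rpow_mul_one_sub_sq_div_sq_rpow_le (by linarith) (by linarith) ha haA
    _ = _ := by
        rw [hApow]
        ring
end

section
/- Fix \ell \in \mathbb{N} and n_1 > n_2 integers, 1 \le j, k \le 2^{\ell}. Let S_n^j denote the trapezoid with vertices (2^{n-1}+(j-1)2^{n-1-\ell}, 1/2), (2^{n-1}+j 2^{n-1-\ell}, 1/2), (2^{n+1}+(j-1)2^{n+1-\ell}, 2), (2^{n+1}+j2^{n+1-\ell}, 2), and for 0 < \alpha \le (3/2)2^{\ell} let S_n^{j,\alpha} = \{\xi \in S_n^j : 1/2 + (\alpha-1)2^{-\ell} < \xi_2 < 1/2+\alpha 2^{-\ell}\}. Then there exists an absolute constant C>0, independent of n_1, n_2, j, k, \ell, such that \sum_{\alpha} \chi_{S_{n_1\ell}^{j,\alpha} + S_{n_2\ell}^{k}} (\xi) \le C for all \xi \in \mathbb{R}^2, where A+B denotes the Minkowski sum. -/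
open Set
open scoped Pointwise

/-- The trapezoid `S_n^j` (at scale `ℓ`) with vertices `(2^{n-1}+(j-1)2^{n-1-ℓ},1/2)`,
`(2^{n-1}+j2^{n-1-ℓ},1/2)`, `(2^{n+1}+(j-1)2^{n+1-ℓ},2)`, `(2^{n+1}+j2^{n+1-ℓ},2)`. -/
def trap (ℓ : ℕ) (n : ℤ) (j : ℕ) : Set (ℝ × ℝ) :=
  {ξ | 1/2 ≤ ξ.2 ∧ ξ.2 ≤ 2 ∧
    2 * ξ.2 * ((2:ℝ) ^ (n - 1) + ((j:ℝ) - 1) * (2:ℝ) ^ (n - 1 - (ℓ:ℤ))) ≤ ξ.1 ∧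
    ξ.1 ≤ 2 * ξ.2 * ((2:ℝ) ^ (n - 1) + (j:ℝ) * (2:ℝ) ^ (n - 1 - (ℓ:ℤ)))}

/-- The horizontal slice `S_n^{j,α}` of the trapezoid `S_n^j`. -/
def trapSlice (ℓ : ℕ) (n : ℤ) (j α : ℕ) : Set (ℝ × ℝ) :=
  {ξ ∈ trap ℓ n j |
    1/2 + ((α:ℝ) - 1) * (2:ℝ) ^ (-(ℓ:ℤ)) < ξ.2 ∧ ξ.2 < 1/2 + (α:ℝ) * (2:ℝ) ^ (-(ℓ:ℤ))}

lemma key_bounds (ℓ : ℕ) (N₁ N₂ : ℤ) (j k α : ℕ)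
    (hj1 : 1 ≤ j) (hj2 : j ≤ 2 ^ ℓ) (hk1 : 1 ≤ k) (hk2 : k ≤ 2 ^ ℓ)
    (hN : N₂ + (ℓ:ℤ) ≤ N₁) (hα1 : 1 ≤ α)
    (ξ : ℝ × ℝ) (hξ : ξ ∈ trapSlice ℓ N₁ j α + trap ℓ N₂ k) :
    (1/2 + ((α:ℝ)-1) * (2:ℝ)^(-(ℓ:ℤ))) * (1 + ((j:ℝ)-1) * (2:ℝ)^(-(ℓ:ℤ))) * (2:ℝ)^N₁ ≤ ξ.1 ∧
    ξ.1 ≤ ((1/2 + (α:ℝ) * (2:ℝ)^(-(ℓ:ℤ))) * (1 + (j:ℝ) * (2:ℝ)^(-(ℓ:ℤ))) + 4 * (2:ℝ)^(-(ℓ:ℤ))) * (2:ℝ)^N₁ := by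
  obtain ⟨η, hη, ζ, hζ, hsum⟩ := hξ
  simp only [trapSlice, trap, Set.mem_setOf_eq, Set.mem_sep_iff] at hη hζ
  obtain ⟨⟨hη2a, hη2b, hη1a, hη1b⟩, hsl1, hsl2⟩ := hη
  obtain ⟨hζ2a, hζ2b, hζ1a, hζ1b⟩ := hζ
  set d : ℝ := (2:ℝ)^(-(ℓ:ℤ)) with hd_def
  set A : ℝ := (2:ℝ)^N₁ with hA_def
  set B : ℝ := (2:ℝ)^N₂ with hB_def
  have hA : (0:ℝ) < A := zpow_pos (by norm_num) _
  have hB : (0:ℝ) < B := zpow_pos (by norm_num) _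
  have hd : (0:ℝ) < d := zpow_pos (by norm_num) _
  have e1 : (2:ℝ)^(N₁-1) = A / 2 := by
    rw [hA_def, zpow_sub₀ (two_ne_zero), zpow_one]
  have e2 : (2:ℝ)^(N₁-1-(ℓ:ℤ)) = A * d / 2 := by
    rw [hA_def, hd_def, show N₁-1-(ℓ:ℤ) = N₁ + -(ℓ:ℤ) - 1 by ring,
      zpow_sub₀ (two_ne_zero), zpow_add₀ (two_ne_zero), zpow_one]
  have e3 : (2:ℝ)^(N₂-1) = B / 2 := by
    rw [hB_def, zpow_sub₀ (two_ne_zero), zpow_one]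
  have e4 : (2:ℝ)^(N₂-1-(ℓ:ℤ)) = B * d / 2 := by
    rw [hB_def, hd_def, show N₂-1-(ℓ:ℤ) = N₂ + -(ℓ:ℤ) - 1 by ring,
      zpow_sub₀ (two_ne_zero), zpow_add₀ (two_ne_zero), zpow_one]
  rw [e1, e2] at hη1a hη1b
  rw [e3, e4] at hζ1a hζ1b
  have hBA : B ≤ A * d := by
    rw [hA_def, hd_def, hB_def, ← zpow_add₀ (two_ne_zero : (2:ℝ) ≠ 0)]
    exact zpow_le_zpow_right₀ (by norm_num) (by linarith)
  have hj1' : (1:ℝ) ≤ (j:ℝ) := by exact_mod_cast hj1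
  have hk1' : (1:ℝ) ≤ (k:ℝ) := by exact_mod_cast hk1
  have hα1' : (1:ℝ) ≤ (α:ℝ) := by exact_mod_cast hα1
  have hpow : (2:ℝ)^(ℓ:ℤ) * d = 1 := by
    rw [hd_def, ← zpow_add₀ (two_ne_zero : (2:ℝ) ≠ 0)]; simp
  have hj2' : (j:ℝ) ≤ (2:ℝ)^(ℓ:ℤ) := by
    rw [zpow_natCast]; exact_mod_cast hj2
  have hk2' : (k:ℝ) ≤ (2:ℝ)^(ℓ:ℤ) := by
    rw [zpow_natCast]; exact_mod_cast hk2
  have hjd : (j:ℝ) * d ≤ 1 := by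
    calc (j:ℝ) * d ≤ (2:ℝ)^(ℓ:ℤ) * d := mul_le_mul_of_nonneg_right hj2' hd.le
    _ = 1 := hpow
  have hkd : (k:ℝ) * d ≤ 1 := by
    calc (k:ℝ) * d ≤ (2:ℝ)^(ℓ:ℤ) * d := mul_le_mul_of_nonneg_right hk2' hd.le
    _ = 1 := hpow
  have ξ1eq : ξ.1 = η.1 + ζ.1 := by rw [← hsum]; rfl
  have hM : 0 ≤ A * (1 + ((j:ℝ)-1)*d) :=
    mul_nonneg hA.le (by linarith [mul_nonneg (sub_nonneg.2 hj1') hd.le])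
  have hM' : 0 ≤ A * (1 + (j:ℝ)*d) :=
    mul_nonneg hA.le (by linarith [mul_nonneg (by positivity : (0:ℝ) ≤ (j:ℝ)) hd.le])
  constructor
  · -- lower bound
    have hζ1pos : 0 ≤ ζ.1 := by
      have t1 : 0 ≤ ζ.2 * B := mul_nonneg (by linarith) hB.le
      have t2 : 0 ≤ (ζ.2 * B) * (((k:ℝ)-1) * d) :=
        mul_nonneg t1 (mul_nonneg (sub_nonneg.2 hk1') hd.le)
      linarith [hζ1a]
    have h1 := mul_le_mul_of_nonneg_right hsl1.le hM
    rw [ξ1eq]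
    linarith [h1, hη1a, hζ1pos]
  · -- upper bound
    have h6 := mul_le_mul_of_nonneg_right hsl2.le hM'
    have hx : 0 ≤ B * (1 + (k:ℝ)*d) :=
      mul_nonneg hB.le (by linarith [mul_nonneg (by positivity : (0:ℝ) ≤ (k:ℝ)) hd.le])
    have h7 : ζ.2 * (B * (1 + (k:ℝ)*d)) ≤ 4 * B := by
      have hy : B * (1 + (k:ℝ)*d) ≤ B * 2 := mul_le_mul_of_nonneg_left (by linarith) hB.le
      calc ζ.2 * (B * (1 + (k:ℝ)*d)) ≤ 2 * (B * (1 + (k:ℝ)*d)) :=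
            mul_le_mul_of_nonneg_right hζ2b hx
        _ ≤ 2 * (B * 2) := by linarith
        _ = 4 * B := by ring
    rw [ξ1eq]
    linarith [h6, h7, hη1b, hζ1b, hBA]

lemma comparison (ℓ : ℕ) (j a b : ℕ) (hj1 : 1 ≤ j) (hj2 : j ≤ 2^ℓ)
    (ha1 : 1 ≤ a) (ha2 : 2*a ≤ 3*2^ℓ) (hab : a ≤ b)
    (A : ℝ) (hA : 0 < A) (t : ℝ)
    (hbt : (1/2 + ((b:ℝ)-1) * (2:ℝ)^(-(ℓ:ℤ))) * (1 + ((j:ℝ)-1) * (2:ℝ)^(-(ℓ:ℤ))) * A ≤ t)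
    (hta : t ≤ ((1/2 + (a:ℝ) * (2:ℝ)^(-(ℓ:ℤ))) * (1 + (j:ℝ) * (2:ℝ)^(-(ℓ:ℤ))) + 4 * (2:ℝ)^(-(ℓ:ℤ))) * A) :
    b ≤ a + 8 := by
  set d : ℝ := (2:ℝ)^(-(ℓ:ℤ)) with hd_def
  have hd : (0:ℝ) < d := zpow_pos (by norm_num) _
  have hLU : (1/2 + ((b:ℝ)-1)*d) * (1 + ((j:ℝ)-1)*d)
      ≤ (1/2 + (a:ℝ)*d)*(1+(j:ℝ)*d) + 4*d :=
    le_of_mul_le_mul_right (le_trans hbt hta) hA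
  have hj1' : (1:ℝ) ≤ (j:ℝ) := by exact_mod_cast hj1
  have hba : (a:ℝ) ≤ (b:ℝ) := by exact_mod_cast hab
  have hpow : (2:ℝ)^(ℓ:ℤ) * d = 1 := by
    rw [hd_def, ← zpow_add₀ (two_ne_zero : (2:ℝ) ≠ 0)]; simp
  have hj2' : (j:ℝ) ≤ (2:ℝ)^(ℓ:ℤ) := by rw [zpow_natCast]; exact_mod_cast hj2
  have hjd : (j:ℝ) * d ≤ 1 := by
    calc (j:ℝ) * d ≤ (2:ℝ)^(ℓ:ℤ) * d := mul_le_mul_of_nonneg_right hj2' hd.le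
    _ = 1 := hpow
  have ha2' : 2*(a:ℝ) ≤ 3*(2:ℝ)^(ℓ:ℤ) := by
    rw [zpow_natCast]; exact_mod_cast ha2
  have had : (a:ℝ) * d ≤ 3/2 := by
    have := mul_le_mul_of_nonneg_right ha2' hd.le
    rw [mul_assoc] at this
    nlinarith [hpow]
  have hfin : (b:ℝ) ≤ (a:ℝ) + 8 := by
    nlinarith [hLU, hd, hjd, hj1', hba, had,
      mul_nonneg (sub_nonneg.2 hj1') (mul_pos hd hd).le,
      mul_le_mul_of_nonneg_right had hd.le,
      mul_pos hd hd]
  exact_mod_cast hfin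

/-- finite overlap of the Minkowski sums `S_{n₁ℓ}^{j,α} + S_{n₂ℓ}^{k}`. -/
theorem finite_overlap_minkowski :
    ∃ C > (0:ℝ), ∀ (ℓ : ℕ) (n₁ n₂ : ℤ) (j k : ℕ),
      1 ≤ j → j ≤ 2 ^ ℓ → 1 ≤ k → k ≤ 2 ^ ℓ → n₂ < n₁ →
      ∀ ξ : ℝ × ℝ,
        ∑ α ∈ Finset.Icc 1 (3 * 2 ^ ℓ / 2),
          (trapSlice ℓ (n₁ * (ℓ:ℤ)) j α + trap ℓ (n₂ * (ℓ:ℤ)) k).indicator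
            (fun _ => (1:ℝ)) ξ ≤ C := by
  classical
  refine ⟨9, by norm_num, ?_⟩
  intro ℓ n₁ n₂ j k hj1 hj2 hk1 hk2 hn ξ
  have hsum : ∑ α ∈ Finset.Icc 1 (3 * 2 ^ ℓ / 2),
      (trapSlice ℓ (n₁ * (ℓ:ℤ)) j α + trap ℓ (n₂ * (ℓ:ℤ)) k).indicator
        (fun _ => (1:ℝ)) ξ
      = (((Finset.Icc 1 (3 * 2 ^ ℓ / 2)).filter
          (fun α => ξ ∈ trapSlice ℓ (n₁ * (ℓ:ℤ)) j α + trap ℓ (n₂ * (ℓ:ℤ)) k)).card : ℝ) := by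
    simp only [Set.indicator_apply]
    rw [Finset.sum_boole]
  rw [hsum]
  set S := (Finset.Icc 1 (3 * 2 ^ ℓ / 2)).filter
      (fun α => ξ ∈ trapSlice ℓ (n₁ * (ℓ:ℤ)) j α + trap ℓ (n₂ * (ℓ:ℤ)) k) with hS_def
  have hN : n₂ * (ℓ:ℤ) + (ℓ:ℤ) ≤ n₁ * (ℓ:ℤ) := by
    have := mul_le_mul_of_nonneg_right (show n₂ + 1 ≤ n₁ by omega) (Int.natCast_nonneg ℓ)
    linarith
  have hA : (0:ℝ) < (2:ℝ)^(n₁ * (ℓ:ℤ)) := zpow_pos (by norm_num) _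
  have hdiam : ∀ a ∈ S, ∀ b ∈ S, b ≤ a + 8 := by
    intro a ha b hb
    by_cases hab : a ≤ b
    · rw [hS_def, Finset.mem_filter, Finset.mem_Icc] at ha hb
      obtain ⟨⟨ha1, ha2⟩, hamem⟩ := ha
      obtain ⟨⟨hb1, _⟩, hbmem⟩ := hb
      have Ka := key_bounds ℓ (n₁ * (ℓ:ℤ)) (n₂ * (ℓ:ℤ)) j k a hj1 hj2 hk1 hk2 hN ha1 ξ hamem
      have Kb := key_bounds ℓ (n₁ * (ℓ:ℤ)) (n₂ * (ℓ:ℤ)) j k b hj1 hj2 hk1 hk2 hN hb1 ξ hbmem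
      exact comparison ℓ j a b hj1 hj2 ha1 (by omega) hab _ hA ξ.1 Kb.1 Ka.2
    · omega
  rcases S.eq_empty_or_nonempty with hS | hS
  · rw [hS]; norm_num
  · have hsub : S ⊆ Finset.Icc (S.min' hS) (S.min' hS + 8) := fun b hb =>
      Finset.mem_Icc.mpr ⟨S.min'_le b hb, hdiam _ (S.min'_mem hS) b hb⟩
    have hcard : S.card ≤ 9 :=
      (Finset.card_le_card hsub).trans (by rw [Nat.card_Icc]; omega)
    exact_mod_cast hcard
end

section
/- Let K: \mathbb{R}^2 \to \mathbb{C} satisfy |K(y)| \le A\, t\delta (1+t\delta|y_1|)^{-3} \min\{1, |t y_1 + y_2|^{-3}\} for all y in the quadrant Q = \{y: y_1 \ge 0, y_2 \le 0\}, where 0 < t \le 1 and 0 < \delta < 1/2. Then for every locally integrable g and every x, \int_{Q} |K(y) g(x-y)|\, dy \le C A\, \mathfrak{m}_t g(x), where \mathfrak{m}_t is the maximal function over all rectangles containing x whose longest side is in the direction (1,t) or (1,-t), and C is independent of t and \delta. -/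
/-!
Cut the quadrant into pieces on which `tδ y₁ ≈ 2^i` and `|t y₁ + y₂| ≈ 2^k`. On such a piece
`|K| ≲ A tδ 2^{-3i} 2^{-3k}`, and the piece lies in the rectangle centred at `0` with long side
`≈ 2^i/(tδ)` along `(1, -t)` and short side `≈ 2^k`; since `x` lies in its translate by `x`, the
integral of `|g(x - ·)|` over it is at most its area times `𝔪_t g(x)`. The product of bound and
area is `O(A 2^{-i} 2^{-k})`, and the double geometric series sums to a constant. Only
monotonicity and countable subadditivity of the lower integral are used, so `K` and `g` need not
be measurable.
-/

open MeasureTheory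
open scoped ENNReal

/-- A rectangle centered at `c` whose longest side (half-length `a ≥ b`) points in the
direction `(1, ε t)`. -/
def dirRect (t : ℝ) (c : ℝ × ℝ) (a b ε : ℝ) : Set (ℝ × ℝ) :=
  {y | |y.1 - c.1 + ε * t * (y.2 - c.2)| ≤ a ∧ |ε * t * (y.1 - c.1) - (y.2 - c.2)| ≤ b}

/-- The maximal function `𝔪_t`: supremum of averages of `|g|` over all rectangles
containing `x` whose longest side points in the direction `(1, t)` or `(1, -t)`. -/
noncomputable def dirMax (t : ℝ) (g : ℝ × ℝ → ℂ) (x : ℝ × ℝ) : ℝ≥0∞ :=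
  ⨆ (c : ℝ × ℝ) (a : ℝ) (b : ℝ) (ε : ℝ)
    (_ : 0 < b ∧ b ≤ a ∧ (ε = 1 ∨ ε = -1) ∧ x ∈ dirRect t c a b ε),
    (volume (dirRect t c a b ε))⁻¹ * ∫⁻ y in dirRect t c a b ε, (‖g y‖₊ : ℝ≥0∞)

lemma measurableSet_dirRect (t : ℝ) (c : ℝ × ℝ) (a b ε : ℝ) :
    MeasurableSet (dirRect t c a b ε) := by
  rw [dirRect, Set.ofPred_and]
  exact (measurableSet_le (by fun_prop) (by fun_prop)).inter
    (measurableSet_le (by fun_prop) (by fun_prop))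

lemma volume_dirRect (t : ℝ) (c : ℝ × ℝ) {a b ε : ℝ} (ha : 0 ≤ a)
    (hε : ε = 1 ∨ ε = -1) :
    volume (dirRect t c a b ε) = ENNReal.ofReal ((1 + t ^ 2)⁻¹ * (2 * a * (2 * b))) := by
  let f : (ℝ × ℝ) →ₗ[ℝ] (ℝ × ℝ) :=
    Matrix.toLin (Module.Basis.finTwoProd ℝ) (Module.Basis.finTwoProd ℝ) !![1, ε * t; ε * t, -1]
  have hdet : LinearMap.det f = -(1 + t ^ 2) := by
    rw [LinearMap.det_toLin, Matrix.det_fin_two_of]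
    rcases hε with rfl | rfl <;> ring
  have hset : dirRect t c a b ε = (· - c) ⁻¹' (f ⁻¹' (Set.Icc (-a) a ×ˢ Set.Icc (-b) b)) := by
    ext y
    simp only [dirRect, f, Set.mem_ofPred_eq, Set.mem_preimage, Matrix.toLin_finTwoProd_apply,
      Set.mem_prod, Set.mem_Icc, Prod.fst_sub, Prod.snd_sub, abs_le]
    constructor <;> rintro ⟨⟨h1, h2⟩, h3, h4⟩ <;> refine ⟨⟨?_, ?_⟩, ?_, ?_⟩ <;> linarith
  have hmeas : MeasurableSet (f ⁻¹' (Set.Icc (-a) a ×ˢ Set.Icc (-b) b)) :=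
    (measurableSet_Icc.prod measurableSet_Icc).preimage f.continuous_of_finiteDimensional.measurable
  have hdet0 : LinearMap.det f ≠ 0 := by rw [hdet]; exact neg_ne_zero.mpr (by positivity)
  rw [hset, (measurePreserving_sub_right volume c).measure_preimage hmeas.nullMeasurableSet,
    Measure.addHaar_preimage_linearMap volume hdet0, hdet,
    Measure.volume_eq_prod, Measure.prod_prod, Real.volume_Icc, Real.volume_Icc,
    abs_inv, abs_neg, abs_of_pos (by positivity), ← ENNReal.ofReal_mul (by linarith),
    ← ENNReal.ofReal_mul (by positivity)]
  ring_nf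

lemma mem_dirRect_self (t : ℝ) (x : ℝ × ℝ) {a b : ℝ} (ε : ℝ) (ha : 0 ≤ a) (hb : 0 ≤ b) :
    x ∈ dirRect t x a b ε := by
  simp [dirRect, ha, hb]

lemma lintegral_comp_sub_dirRect_zero (f : ℝ × ℝ → ℝ≥0∞) (t : ℝ) (x : ℝ × ℝ) (a b ε : ℝ) :
    ∫⁻ y in dirRect t 0 a b ε, f (x - y) = ∫⁻ z in dirRect t x a b ε, f z := by
  have hpre : dirRect t 0 a b ε = (x - ·) ⁻¹' dirRect t x a b ε := by
    ext y
    simp only [dirRect, Set.mem_ofPred_eq, Set.mem_preimage, Prod.fst_sub, Prod.snd_sub,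
      Prod.fst_zero, Prod.snd_zero, sub_zero]
    rw [← abs_neg, ← abs_neg (ε * t * y.1 - y.2)]
    ring_nf
  rw [← lintegral_indicator (measurableSet_dirRect _ _ _ _ _),
    ← lintegral_indicator (measurableSet_dirRect _ _ _ _ _), hpre]
  calc ∫⁻ y, ((x - ·) ⁻¹' dirRect t x a b ε).indicator (fun y => f (x - y)) y
      = ∫⁻ y, (dirRect t x a b ε).indicator f (x - y) :=
        lintegral_congr fun y => Set.indicator_comp_right (x - ·)
    _ = _ := lintegral_sub_left_eq_self _ x

lemma setLIntegral_le_mul_dirMax {t : ℝ} {g : ℝ × ℝ → ℂ} {x c : ℝ × ℝ} {a b ε : ℝ}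
    (hb : 0 < b) (hba : b ≤ a) (hε : ε = 1 ∨ ε = -1) (hx : x ∈ dirRect t c a b ε) :
    ∫⁻ z in dirRect t c a b ε, (‖g z‖₊ : ℝ≥0∞) ≤ ENNReal.ofReal (4 * a * b) * dirMax t g x := by
  set R := dirRect t c a b ε
  have ha : 0 < a := hb.trans_le hba
  have hvol := volume_dirRect t c (b := b) ha.le hε
  have hR0 : volume R ≠ 0 := by rw [hvol]; exact (ENNReal.ofReal_pos.mpr (by positivity)).ne'
  have hRtop : volume R ≠ ∞ := by rw [hvol]; exact ENNReal.ofReal_ne_top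
  have hvol_le : volume R ≤ ENNReal.ofReal (4 * a * b) := by
    rw [hvol]
    apply ENNReal.ofReal_le_ofReal
    calc (1 + t ^ 2)⁻¹ * (2 * a * (2 * b)) ≤ 1 * (2 * a * (2 * b)) := by
          gcongr
          exact inv_le_one_of_one_le₀ (by nlinarith)
      _ = 4 * a * b := by ring
  have havg : (volume R)⁻¹ * ∫⁻ z in R, (‖g z‖₊ : ℝ≥0∞) ≤ dirMax t g x :=
    le_iSup₂_of_le c a <| le_iSup₂_of_le b ε <| le_iSup_of_le ⟨hb, hba, hε, hx⟩ le_rfl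
  calc ∫⁻ z in R, (‖g z‖₊ : ℝ≥0∞)
      = volume R * ((volume R)⁻¹ * ∫⁻ z in R, (‖g z‖₊ : ℝ≥0∞)) := by
        rw [← mul_assoc, ENNReal.mul_inv_cancel hR0 hRtop, one_mul]
    _ ≤ _ := mul_le_mul' hvol_le havg

lemma le_of_decay_bounds {v B w u : ℝ} (hB : 0 ≤ B) (hw : 0 ≤ w)
    (h₁ : v ≤ B * (1 + w) ^ (-(3:ℝ)))
    (h₂ : 1 ≤ u → v ≤ B * (1 + w) ^ (-(3:ℝ)) * u ^ (-(3:ℝ))) :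
    v ≤ B * ((max w 1) ^ 3)⁻¹ * ((max u 1) ^ 3)⁻¹ := by
  have hrpow : ∀ {z : ℝ}, 0 ≤ z → z ^ (-(3:ℝ)) = (z ^ 3)⁻¹ := fun hz => by
    rw [Real.rpow_neg hz]; norm_cast
  have hw' : (1 + w) ^ (-(3:ℝ)) ≤ ((max w 1) ^ 3)⁻¹ := by
    rw [hrpow (by positivity)]
    gcongr
    exact max_le (by linarith) (by linarith)
  rcases le_or_gt 1 u with hu | hu
  · rw [max_eq_left hu]
    calc v ≤ B * (1 + w) ^ (-(3:ℝ)) * u ^ (-(3:ℝ)) := h₂ hu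
      _ ≤ _ := by
        rw [hrpow (z := u) (by linarith)]
        exact mul_le_mul_of_nonneg_right (mul_le_mul_of_nonneg_left hw' hB) (by positivity)
  · rw [max_eq_right hu.le, one_pow, inv_one, mul_one]
    exact h₁.trans (by gcongr)

def dyadicShell (n : ℕ) : Set ℝ := {s | s ≤ 2 ^ n ∧ 2 ^ n ≤ 2 * max s 1}

lemma measurableSet_dyadicShell (n : ℕ) : MeasurableSet (dyadicShell n) := by
  rw [dyadicShell, Set.ofPred_and]
  exact (measurableSet_le (by fun_prop) (by fun_prop)).inter
    (measurableSet_le (by fun_prop) (by fun_prop))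

lemma exists_mem_dyadicShell (s : ℝ) : ∃ n, s ∈ dyadicShell n := by
  obtain ⟨n, hn, hn'⟩ := exists_nat_pow_near (le_max_right s 1) one_lt_two
  exact ⟨n + 1, (le_max_left s 1).trans hn'.le, by rw [pow_succ]; linarith⟩

lemma inv_max_pow_three_le {s : ℝ} {n : ℕ} (h : s ∈ dyadicShell n) :
    ((max s 1) ^ 3)⁻¹ ≤ 8 / (2 ^ n) ^ 3 := by
  have : ((2:ℝ) ^ n) ^ 3 ≤ 8 * (max s 1) ^ 3 := by
    calc ((2:ℝ) ^ n) ^ 3 ≤ (2 * max s 1) ^ 3 := by gcongr; exact h.2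
      _ = 8 * (max s 1) ^ 3 := by ring
  rw [inv_eq_one_div, div_le_div_iff₀ (by positivity) (by positivity)]
  linarith

/-- The region `A_{i,k}` of the quadrant, with `s = tδ`. -/
def quadrantPiece (t s : ℝ) (i k : ℕ) : Set (ℝ × ℝ) :=
  {y | 0 ≤ y.1 ∧ y.2 ≤ 0 ∧ s * y.1 ∈ dyadicShell i ∧ |t * y.1 + y.2| ∈ dyadicShell k}

lemma measurableSet_quadrantPiece (t s : ℝ) (i k : ℕ) :
    MeasurableSet (quadrantPiece t s i k) := by
  simp only [quadrantPiece, Set.ofPred_and]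
  exact (measurableSet_le measurable_const measurable_fst).inter
    ((measurableSet_le measurable_snd measurable_const).inter
      (((measurableSet_dyadicShell i).preimage (by fun_prop)).inter
        ((measurableSet_dyadicShell k).preimage (by fun_prop))))

lemma quadrant_subset_iUnion_quadrantPiece (t s : ℝ) :
    {y : ℝ × ℝ | 0 ≤ y.1 ∧ y.2 ≤ 0} ⊆ ⋃ p : ℕ × ℕ, quadrantPiece t s p.1 p.2 := by
  rintro y ⟨hy1, hy2⟩
  obtain ⟨i, hi⟩ := exists_mem_dyadicShell (s * y.1)
  obtain ⟨k, hk⟩ := exists_mem_dyadicShell |t * y.1 + y.2|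
  exact Set.mem_iUnion.mpr ⟨(i, k), hy1, hy2, hi, hk⟩

lemma quadrantPiece_subset_dirRect {t s : ℝ} (ht : 0 ≤ t) (ht1 : t ≤ 1) (hs : 0 < s) (i k : ℕ) :
    quadrantPiece t s i k ⊆ dirRect t 0 (2 * 2 ^ i / s + 2 ^ k) (2 ^ k) (-1) := by
  rintro y ⟨hy1, -, hi, hk⟩
  have hu : |t * y.1 + y.2| ≤ 2 ^ k := hk.1
  have hy1' : y.1 ≤ 2 ^ i / s := by rw [le_div_iff₀ hs, mul_comm]; exact hi.1
  simp only [dirRect, Set.mem_ofPred_eq, Prod.fst_zero, Prod.snd_zero, sub_zero]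
  constructor
  · calc |y.1 + -1 * t * y.2| = |(1 + t ^ 2) * y.1 - t * (t * y.1 + y.2)| := by ring_nf
      _ ≤ |(1 + t ^ 2) * y.1| + |t * (t * y.1 + y.2)| := abs_sub _ _
      _ = (1 + t ^ 2) * y.1 + t * |t * y.1 + y.2| := by
        rw [abs_mul, abs_mul, abs_of_nonneg hy1, abs_of_nonneg ht, abs_of_pos (by positivity)]
      _ ≤ 2 * (2 ^ i / s) + 1 * 2 ^ k := by gcongr; nlinarith
      _ = _ := by ring
  · calc |-1 * t * y.1 - y.2| = |t * y.1 + y.2| := by rw [← abs_neg]; ring_nf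
      _ ≤ _ := hu

lemma piece_weight_le {A s P Q : ℝ} (hA : 0 ≤ A) (hs : 0 < s) (hs1 : s ≤ 1)
    (hP : 1 ≤ P) (hQ : 1 ≤ Q) :
    A * s * (8 / P ^ 3) * (8 / Q ^ 3) * (4 * (2 * P / s + Q) * Q) ≤ 768 * A * (P⁻¹ * Q⁻¹) := by
  have hP0 : 0 < P := by linarith
  have hQ0 : 0 < Q := by linarith
  have e : A * s * (8 / P ^ 3) * (8 / Q ^ 3) * (4 * (2 * P / s + Q) * Q)
      = 256 * A * (2 * P + s * Q) / (P ^ 3 * Q ^ 2) := by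
    field_simp
    ring
  rw [e, div_le_iff₀ (by positivity)]
  have h1 : 2 * P + s * Q ≤ 3 * P * Q := by nlinarith
  have h2 : 768 * A * (P⁻¹ * Q⁻¹) * (P ^ 3 * Q ^ 2) = 768 * A * (P ^ 2 * Q) := by
    field_simp
  have hPP : P ≤ P ^ 2 := by nlinarith
  calc 256 * A * (2 * P + s * Q) ≤ 256 * A * (3 * (P * Q)) := by gcongr; linarith
    _ ≤ 256 * A * (3 * (P ^ 2 * Q)) := by gcongr
    _ = _ := by rw [h2]; ring

lemma tsum_mul_inv_two_pow_mul_inv_two_pow (c : ℝ≥0∞) :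
    ∑' p : ℕ × ℕ, c * 2⁻¹ ^ p.1 * 2⁻¹ ^ p.2 = 4 * c := by
  rw [ENNReal.tsum_prod (f := fun i k => c * 2⁻¹ ^ i * 2⁻¹ ^ k)]
  simp only [ENNReal.tsum_mul_left, ENNReal.tsum_mul_right, ENNReal.tsum_geometric,
    ENNReal.one_sub_inv_two, inv_inv]
  ring

lemma lintegral_quadrantPiece_le {t s A : ℝ} {K g : ℝ × ℝ → ℂ} (x : ℝ × ℝ)
    (ht : 0 ≤ t) (ht1 : t ≤ 1) (hs : 0 < s) (hs1 : s ≤ 1) (hA : 0 ≤ A)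
    (hK : ∀ y : ℝ × ℝ, 0 ≤ y.1 → y.2 ≤ 0 →
      ‖K y‖ ≤ A * s * ((max (s * y.1) 1) ^ 3)⁻¹ * ((max |t * y.1 + y.2| 1) ^ 3)⁻¹)
    (i k : ℕ) :
    ∫⁻ y in quadrantPiece t s i k, (‖K y‖₊ : ℝ≥0∞) * (‖g (x - y)‖₊ : ℝ≥0∞)
      ≤ ENNReal.ofReal (768 * A) * 2⁻¹ ^ i * 2⁻¹ ^ k * dirMax t g x := by
  set P : ℝ := 2 ^ i
  set Q : ℝ := 2 ^ k
  set M := A * s * (8 / P ^ 3) * (8 / Q ^ 3)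
  set a := 2 * P / s + Q
  have hP : 1 ≤ P := one_le_pow₀ one_le_two
  have hQ : 1 ≤ Q := one_le_pow₀ one_le_two
  have hKM : ∀ y ∈ quadrantPiece t s i k, (‖K y‖₊ : ℝ≥0∞) ≤ ENNReal.ofReal M := by
    rintro y ⟨hy1, hy2, hi, hk⟩
    rw [← enorm_eq_nnnorm, ← ofReal_norm]
    refine ENNReal.ofReal_le_ofReal ((hK y hy1 hy2).trans ?_)
    show _ ≤ A * s * (8 / P ^ 3) * (8 / Q ^ 3)
    gcongr
    exacts [inv_max_pow_three_le hi, inv_max_pow_three_le hk]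
  calc ∫⁻ y in quadrantPiece t s i k, (‖K y‖₊ : ℝ≥0∞) * (‖g (x - y)‖₊ : ℝ≥0∞)
      ≤ ∫⁻ y in quadrantPiece t s i k, ENNReal.ofReal M * (‖g (x - y)‖₊ : ℝ≥0∞) :=
        setLIntegral_mono' (measurableSet_quadrantPiece t s i k) fun y hy =>
          mul_le_mul_left (hKM y hy) _
    _ = ENNReal.ofReal M * ∫⁻ y in quadrantPiece t s i k, (‖g (x - y)‖₊ : ℝ≥0∞) :=
        lintegral_const_mul' _ _ ENNReal.ofReal_ne_top
    _ ≤ ENNReal.ofReal M * ∫⁻ y in dirRect t 0 a Q (-1), (‖g (x - y)‖₊ : ℝ≥0∞) := by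
        gcongr
        exact quadrantPiece_subset_dirRect ht ht1 hs i k
    _ = ENNReal.ofReal M * ∫⁻ z in dirRect t x a Q (-1), (‖g z‖₊ : ℝ≥0∞) := by
        rw [lintegral_comp_sub_dirRect_zero (fun z => (‖g z‖₊ : ℝ≥0∞))]
    _ ≤ ENNReal.ofReal M * (ENNReal.ofReal (4 * a * Q) * dirMax t g x) := by
        have hQa : Q ≤ a := le_add_of_nonneg_left (by positivity)
        gcongr
        exact setLIntegral_le_mul_dirMax (by positivity) hQa (Or.inr rfl)
          (mem_dirRect_self t x _ (by positivity) (by positivity))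
    _ ≤ ENNReal.ofReal (768 * A * (P⁻¹ * Q⁻¹)) * dirMax t g x := by
        rw [← mul_assoc, ← ENNReal.ofReal_mul (by positivity)]
        exact mul_le_mul_left (ENNReal.ofReal_le_ofReal (piece_weight_le hA hs hs1 hP hQ)) _
    _ = _ := by
        rw [← mul_assoc, ENNReal.ofReal_mul (by positivity), ENNReal.ofReal_mul (by positivity),
          ENNReal.ofReal_inv_of_pos (by positivity), ENNReal.ofReal_inv_of_pos (by positivity)]
        simp [P, Q, ENNReal.inv_pow]

/-- kernels with the decay
`|K(y)| ≤ A tδ (1+tδ|y₁|)^{-3} min{1, |ty₁+y₂|^{-3}}` on the quadrant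
`Q = {y₁ ≥ 0, y₂ ≤ 0}` are dominated, upon integration against `g(x-·)`, by the
directional maximal function `𝔪_t g(x)`, uniformly in `t` and `δ`. -/
theorem kernel_dominated_by_dirMax :
    ∃ C > (0:ℝ), ∀ (t δ A : ℝ) (K g : ℝ × ℝ → ℂ) (x : ℝ × ℝ),
      0 < t → t ≤ 1 → 0 < δ → δ < 1/2 → 0 ≤ A →
      (∀ y : ℝ × ℝ, 0 ≤ y.1 → y.2 ≤ 0 →
        (‖K y‖ ≤ A * t * δ * (1 + t * δ * |y.1|) ^ (-(3:ℝ))) ∧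
        (1 ≤ |t * y.1 + y.2| →
          ‖K y‖ ≤ A * t * δ * (1 + t * δ * |y.1|) ^ (-(3:ℝ)) * |t * y.1 + y.2| ^ (-(3:ℝ)))) →
      ∫⁻ y in {y : ℝ × ℝ | 0 ≤ y.1 ∧ y.2 ≤ 0},
          (‖K y‖₊ : ℝ≥0∞) * (‖g (x - y)‖₊ : ℝ≥0∞)
        ≤ ENNReal.ofReal (C * A) * dirMax t g x := by
  refine ⟨3072, by norm_num, fun t δ A K g x ht ht1 hδ hδ2 hA hK => ?_⟩
  have hs : 0 < t * δ := mul_pos ht hδ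
  have hs1 : t * δ ≤ 1 := by nlinarith
  have hKmax : ∀ y : ℝ × ℝ, 0 ≤ y.1 → y.2 ≤ 0 → ‖K y‖ ≤
      A * (t * δ) * ((max (t * δ * y.1) 1) ^ 3)⁻¹ * ((max |t * y.1 + y.2| 1) ^ 3)⁻¹ := by
    intro y hy1 hy2
    obtain ⟨h₁, h₂⟩ := hK y hy1 hy2
    rw [abs_of_nonneg hy1] at h₁ h₂
    rw [← mul_assoc]
    exact le_of_decay_bounds (by positivity) (by positivity) h₁ h₂
  calc ∫⁻ y in {y : ℝ × ℝ | 0 ≤ y.1 ∧ y.2 ≤ 0}, (‖K y‖₊ : ℝ≥0∞) * (‖g (x - y)‖₊ : ℝ≥0∞)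
      ≤ ∫⁻ y in ⋃ p : ℕ × ℕ, quadrantPiece t (t * δ) p.1 p.2,
          (‖K y‖₊ : ℝ≥0∞) * (‖g (x - y)‖₊ : ℝ≥0∞) :=
        lintegral_mono_set (quadrant_subset_iUnion_quadrantPiece t (t * δ))
    _ ≤ ∑' p : ℕ × ℕ, ∫⁻ y in quadrantPiece t (t * δ) p.1 p.2,
          (‖K y‖₊ : ℝ≥0∞) * (‖g (x - y)‖₊ : ℝ≥0∞) := lintegral_iUnion_le _ _
    _ ≤ ∑' p : ℕ × ℕ, ENNReal.ofReal (768 * A) * 2⁻¹ ^ p.1 * 2⁻¹ ^ p.2 * dirMax t g x :=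
        ENNReal.tsum_le_tsum fun p =>
          lintegral_quadrantPiece_le x ht.le ht1 hs hs1 hA hKmax p.1 p.2
    _ = ENNReal.ofReal (3072 * A) * dirMax t g x := by
        rw [ENNReal.tsum_mul_right, tsum_mul_inv_two_pow_mul_inv_two_pow,
          show (3072 : ℝ) * A = 4 * (768 * A) by ring, ENNReal.ofReal_mul (by norm_num)]
        norm_num
end
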